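/- Let K be a field of characteristic ≠ p containing a primitive p-th root of unity, L/K a finite Galois extension, and α ∈ L^× an element such that for every σ ∈ Gal(L/K), σ(α)·α^{-e(σ)} ∈ (L^×)^p for some integer e(σ) (i.e., the class of α in L^×/(L^×)^p spans a Gal(L/K)-stable line). Then the extension L(α^{1/p})/K is Galois. -/

import Mathlib

/-! Write `F = L(r)` with `r ^ p = α`. Each conjugate `σ α = α ^ e * β ^ p` has the `p`-th root
`r ^ e * β` in `F`, and `F` contains the `p`-th roots of unity, so `m(X ^ p)`, where `m` is the
minimal polynomial of `α` over `K`, splits in `F`. Since `r` is a root of `m(X ^ p)`, `F` is the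
compositum of the normal extension `L` with a splitting field of `m(X ^ p)`, hence normal over `K`.
It is separable because `X ^ p - α` is separable over `L` when `p` is invertible and `α ≠ 0`. -/

open Polynomial IntermediateField

theorem Polynomial.Splits.expand_of_isPrimitiveRoot {E : Type*} [Field E] {f : E[X]}
    (hf : f.Splits) {n : ℕ} {ζ : E} (hζ : IsPrimitiveRoot ζ n)
    (hroots : ∀ b ∈ f.roots, ∃ c, c ^ n = b) : (expand E n f).Splits := by
  rw [expand_eq_comp_X_pow, hf.eq_prod_roots, mul_comp, C_comp, multiset_prod_comp,
    Multiset.map_map]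
  refine (Splits.multisetProd ?_).C_mul _
  simp only [Multiset.mem_map, Function.comp_apply, sub_comp, X_comp, C_comp]
  rintro _ ⟨b, hb, rfl⟩
  obtain ⟨c, hc⟩ := hroots b hb
  exact X_pow_sub_C_splits_of_isPrimitiveRoot hζ hc

section

variable {K Ω : Type*} [Field K] [Field Ω] [Algebra K Ω]

theorem exists_pow_eq_of_eq_zpow_mul_pow {L : IntermediateField K Ω} {α a β : L} {e : ℤ}
    {n : ℕ} (h : a = α ^ e * β ^ n) {r : Ω} (hr : r ^ n = α) :
    ∃ c ∈ L ⊔ K⟮r⟯, c ^ n = a := by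
  have hrF : r ∈ L ⊔ K⟮r⟯ := (le_sup_right : K⟮r⟯ ≤ _) (mem_adjoin_simple_self K r)
  have hβF : (β : Ω) ∈ L ⊔ K⟮r⟯ := (le_sup_left : L ≤ _) β.2
  refine ⟨r ^ e * β, mul_mem (zpow_mem hrF e) hβF, ?_⟩
  rw [mul_pow, ← zpow_natCast (r ^ e), ← zpow_mul, mul_comm e, zpow_mul, zpow_natCast, hr, h]
  push_cast; rfl

theorem normal_sup_adjoin_simple_of_splits (L : IntermediateField K Ω) [Normal K L] {r : Ω}
    {f : K[X]} (hf0 : f ≠ 0) (hfr : aeval r f = 0)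
    (hsplit : (f.map (algebraMap K ↥(L ⊔ K⟮r⟯))).Splits) :
    Normal K ↥(L ⊔ K⟮r⟯) := by
  set F := L ⊔ K⟮r⟯
  set M := adjoin K (f.rootSet Ω)
  have hΩ : (f.map (algebraMap K Ω)).Splits := by
    simpa [Polynomial.map_map] using hsplit.map F.val.toRingHom
  have : IsSplittingField K M f := adjoin_rootSet_isSplittingField hΩ
  have : Normal K M := Normal.of_isSplittingField f
  have hMF : M ≤ F := by
    rw [adjoin_le_iff, ← hsplit.image_rootSet F.val]
    rintro _ ⟨x, -, rfl⟩
    exact x.2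
  have hrM : K⟮r⟯ ≤ M :=
    adjoin_simple_le_iff.2 (subset_adjoin K _ (mem_rootSet.2 ⟨hf0, hfr⟩))
  have hLM : L ⊔ M = F := le_antisymm (sup_le le_sup_left hMF) (sup_le_sup_left hrM L)
  exact hLM ▸ (inferInstance : Normal K ↥(L ⊔ M))

theorem isSeparable_sup_adjoin_simple (L : IntermediateField K Ω) [Algebra.IsSeparable K L]
    {r : Ω} (hr : IsSeparable L r) : Algebra.IsSeparable K ↥(L ⊔ K⟮r⟯) := by
  have : Algebra.IsSeparable L (adjoin L {r}) :=
    (isSeparable_adjoin_simple_iff_isSeparable L Ω).2 hr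
  have : Algebra.IsSeparable K (adjoin L {r}) := .trans K L _
  rw [← restrictScalars_adjoin_eq_sup]
  exact this

theorem splits_expand_minpoly (L : IntermediateField K Ω) [Normal K L] {α : L} {n : ℕ}
    {ζ : K} (hζ : IsPrimitiveRoot ζ n)
    (hstable : ∀ σ : L ≃ₐ[K] L, ∃ (e : ℤ) (β : L), σ α = α ^ e * β ^ n)
    {r : Ω} (hr : r ^ n = algebraMap L Ω α) :
    ((expand K n (minpoly K α)).map (algebraMap K ↥(L ⊔ K⟮r⟯))).Splits := by
  set F := L ⊔ K⟮r⟯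
  set i := (inclusion (le_sup_left : L ≤ F)).toRingHom
  have hm : ((minpoly K α).map (algebraMap K L)).Splits := Normal.splits inferInstance α
  have hmap :
      (minpoly K α).map (algebraMap K F) = ((minpoly K α).map (algebraMap K L)).map i := by
    rw [Polynomial.map_map]
    rfl
  rw [map_expand, hmap]
  refine (hm.map i).expand_of_isPrimitiveRoot (hζ.map_of_injective (algebraMap K F).injective)
    fun b hb ↦ ?_
  rw [hm.roots_map, Multiset.mem_map] at hb
  obtain ⟨a, ha, rfl⟩ := hb
  obtain ⟨σ, rfl⟩ := minpoly.exists_algEquiv_of_root' (Algebra.IsAlgebraic.isAlgebraic α)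
    (by simpa [aeval_def, eval_map] using (mem_roots'.1 ha).2)
  obtain ⟨e, β, h⟩ := hstable σ
  obtain ⟨c, hcF, hc⟩ := exists_pow_eq_of_eq_zpow_mul_pow h hr
  exact ⟨⟨c, hcF⟩, Subtype.ext hc⟩

end

theorem stmt11_general (p : ℕ) (K Ω : Type*) [Field K] [Field Ω] [Algebra K Ω]
    (hchar : (p : K) ≠ 0) (ζ : K) (hζ : IsPrimitiveRoot ζ p)
    (L : IntermediateField K Ω) [IsGalois K ↥L]
    (α : ↥L) (hα : α ≠ 0)
    (hstable : ∀ σ : ↥L ≃ₐ[K] ↥L, ∃ (e : ℤ) (β : ↥L), β ≠ 0 ∧ σ α = α ^ e * β ^ p)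
    (r : Ω) (hr : r ^ p = algebraMap ↥L Ω α) :
    IsGalois K ↥(L ⊔ IntermediateField.adjoin K {r}) := by
  have hpL : (p : L) ≠ 0 := by
    rwa [← map_natCast (algebraMap K L), _root_.map_ne_zero]
  have hsep : IsSeparable L r :=
    (separable_X_pow_sub_C α hpL hα).of_dvd (minpoly.dvd L r (by simp [hr]))
  have hq0 : expand K p (minpoly K α) ≠ 0 :=
    (expand_ne_zero (Nat.pos_of_ne_zero (by rintro rfl; exact hchar Nat.cast_zero))).2
      (minpoly.ne_zero (Algebra.IsIntegral.isIntegral α))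
  exact isGalois_iff.2 ⟨isSeparable_sup_adjoin_simple L hsep,
    normal_sup_adjoin_simple_of_splits L hq0 (by simp [expand_aeval, hr])
      (splits_expand_minpoly L hζ (fun σ ↦ (hstable σ).imp fun _ ⟨β, _, h⟩ ↦ ⟨β, h⟩) hr)⟩

/-- Let `K` be a field of characteristic `≠ p` containing a primitive `p`-th root of unity,
`L/K` a finite Galois extension, and `α ∈ Lˣ` such that the class of `α` in `Lˣ/(Lˣ)^p`
spans a `Gal(L/K)`-stable line. Then `L(α^{1/p})/K` is Galois. -/
theorem stmt11 (p : ℕ) (hp : p.Prime) (K Ω : Type*) [Field K] [Field Ω] [Algebra K Ω]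
    (hchar : (p : K) ≠ 0) (ζ : K) (hζ : IsPrimitiveRoot ζ p)
    (L : IntermediateField K Ω) [FiniteDimensional K L] [IsGalois K ↥L]
    (α : ↥L) (hα : α ≠ 0)
    (hstable : ∀ σ : ↥L ≃ₐ[K] ↥L, ∃ (e : ℤ) (β : ↥L), β ≠ 0 ∧ σ α = α ^ e * β ^ p)
    (r : Ω) (hr : r ^ p = algebraMap ↥L Ω α) :
    IsGalois K ↥(L ⊔ IntermediateField.adjoin K {r}) :=
  stmt11_general p K Ω hchar ζ hζ L α hα hstable r hr
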